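/- For all n ≥ 0, d/dx E_{n+1}^{(k_1,…,k_r)}(x; a, b, c) = (n+1)(r ln c) · E_n^{(k_1,…,k_r)}(x; a, b, c). -/

import Mathlib

/-!
Since `c ^ (r x t) = exp (r log c · x t)`, the generating function is `G(t) · exp (α x t)` with
`α = r log c` and `G` independent of `x`. Comparing coefficients of the Cauchy product of the
series of `G` (read off at `x = 0`) with the exponential series shows that `E_n` is the Appell
sequence `E_n(x) = ∑ⱼ (n choose j) E_j(0) (α x)^(n-j)`, which differentiates termwise to
`(n + 1) α E_n(x)` because `(n+1 choose j) (n + 1 - j) = (n + 1) (n choose j)`.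
-/

/-- The multiple polylogarithm
`Li_{(k_1,…,k_r)}(z) = ∑_{1 ≤ m_1 ≤ … ≤ m_r} z^{m_r}/(m_1^{k_1} ⋯ m_r^{k_r})`. -/
noncomputable def multiPolyLog (r : ℕ) (hr : 0 < r) (k : Fin r → ℤ) (z : ℝ) : ℝ :=
  ∑' f : {f : Fin r → ℕ // Monotone f ∧ 0 < f ⟨0, hr⟩},
    z ^ (f.1 ⟨r - 1, Nat.sub_lt hr Nat.one_pos⟩) / ∏ i, ((f.1 i : ℝ)) ^ (k i)

open FormalMultilinearSeries Finset

section PowerSeries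

variable {A B : ℕ → ℝ} {f : ℝ → ℝ} {ε : ℝ}

lemma ofScalars_apply_eq_mul_pow (t : ℝ) (n : ℕ) :
    ofScalars ℝ A n (fun _ => t) = A n * t ^ n := by
  rw [ofScalars_apply_eq, smul_eq_mul]

lemma le_radius_ofScalars_of_summable (h : ∀ t : ℝ, |t| < ε → Summable fun n => A n * t ^ n) :
    ENNReal.ofReal ε ≤ (ofScalars ℝ A).radius := by
  refine ENNReal.le_of_forall_nnreal_lt fun s hs => ?_
  have hsε : |(s : ℝ)| < ε := by
    rw [NNReal.abs_eq]
    exact ENNReal.coe_lt_ofReal.mp hs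
  refine (ofScalars ℝ A).le_radius_of_tendsto (l := 0) ?_
  simpa [ofScalars_norm, abs_mul, abs_pow] using (h s hsε).tendsto_atTop_zero.abs

lemma summable_abs_mul_pow_of_summable
    (h : ∀ t : ℝ, |t| < ε → Summable fun n => A n * t ^ n) {t : ℝ} (ht : |t| < ε) :
    Summable fun n => |A n * t ^ n| := by
  have hmem : t ∈ Metric.eball (0 : ℝ) (ofScalars ℝ A).radius := by
    refine lt_of_lt_of_le ?_ (le_radius_ofScalars_of_summable h)
    simpa [edist_dist, ENNReal.ofReal_lt_ofReal_iff_of_nonneg] using ht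
  simpa only [ofScalars_apply_eq_mul_pow, Real.norm_eq_abs] using
    (ofScalars ℝ A).summable_norm_apply hmem

lemma hasFPowerSeriesOnBall_ofScalars_of_hasSum (hε : 0 < ε)
    (h : ∀ t : ℝ, |t| < ε → HasSum (fun n => A n * t ^ n) (f t)) :
    HasFPowerSeriesOnBall f (ofScalars ℝ A) 0 (ENNReal.ofReal ε) where
  r_le := le_radius_ofScalars_of_summable fun t ht => (h t ht).summable
  r_pos := ENNReal.ofReal_pos.mpr hε
  hasSum {t} ht := by
    rw [zero_add]
    simp only [ofScalars_apply_eq_mul_pow]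
    exact h t (by simpa [edist_dist] using ht)

lemma eq_of_hasSum_mul_pow (hε : 0 < ε)
    (hA : ∀ t : ℝ, |t| < ε → HasSum (fun n => A n * t ^ n) (f t))
    (hB : ∀ t : ℝ, |t| < ε → HasSum (fun n => B n * t ^ n) (f t)) : A = B :=
  ofScalars_series_injective ℝ ℝ <|
    (hasFPowerSeriesOnBall_ofScalars_of_hasSum hε hA).hasFPowerSeriesAt.eq_formalMultilinearSeries
      (hasFPowerSeriesOnBall_ofScalars_of_hasSum hε hB).hasFPowerSeriesAt

end PowerSeries

section Appell

noncomputable def appell (e : ℕ → ℝ) (α : ℝ) (m : ℕ) (y : ℝ) : ℝ :=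
  ∑ j ∈ range (m + 1), (m.choose j : ℝ) * e j * (α * y) ^ (m - j)

variable (e : ℕ → ℝ) (α : ℝ)

lemma hasDerivAt_appell_succ (m : ℕ) (y : ℝ) :
    HasDerivAt (appell e α (m + 1)) ((m + 1) * α * appell e α m y) y := by
  have hterm (j : ℕ) : HasDerivAt (fun y => ((m + 1).choose j : ℝ) * e j * (α * y) ^ (m + 1 - j))
      (((m + 1).choose j : ℝ) * e j * (((m + 1 - j : ℕ) : ℝ) * (α * y) ^ (m + 1 - j - 1) * α)) y :=
    (((hasDerivAt_id y).const_mul α).pow _).const_mul _ |>.congr_deriv (by simp)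
  refine (HasDerivAt.fun_sum fun j _ => hterm j).congr_deriv ?_
  rw [sum_range_succ, Nat.sub_self, Nat.cast_zero, zero_mul, zero_mul, mul_zero, add_zero,
    appell, mul_sum]
  refine sum_congr rfl fun j hj => ?_
  have hjm : m + 1 - j - 1 = m - j := by omega
  have hchoose : ((m + 1).choose j : ℝ) * ((m + 1 - j : ℕ) : ℝ) = (m.choose j : ℝ) * (m + 1) := by
    exact_mod_cast (Nat.choose_mul_succ_eq m j).symm
  rw [hjm]
  linear_combination (e j * (α * y) ^ (m - j) * α) * hchoose

lemma hasSum_appell_div_factorial_mul_pow {g t : ℝ}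
    (he : HasSum (fun n => e n / n.factorial * t ^ n) g)
    (he_abs : Summable fun n => |e n / n.factorial * t ^ n|) (y : ℝ) :
    HasSum (fun n => appell e α n y / n.factorial * t ^ n) (g * Real.exp (α * y * t)) := by
  have hexp : HasSum (fun n => (α * y * t) ^ n / n.factorial) (Real.exp (α * y * t)) := by
    rw [Real.exp_eq_exp_ℝ]
    exact NormedSpace.expSeries_div_hasSum_exp (α * y * t)
  have hprod := hasSum_sum_range_mul_of_summable_norm (R := ℝ)
    (by simpa only [Real.norm_eq_abs] using he_abs)
    (NormedSpace.norm_expSeries_div_summable (𝔸 := ℝ) (α * y * t))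
  rw [he.tsum_eq, hexp.tsum_eq] at hprod
  have hcoeff (n : ℕ) : appell e α n y / n.factorial * t ^ n = ∑ j ∈ range (n + 1),
      e j / j.factorial * t ^ j * ((α * y * t) ^ (n - j) / (n - j).factorial) := by
    rw [appell, sum_div, sum_mul]
    refine sum_congr rfl fun j hj => ?_
    have hjn : j ≤ n := Nat.lt_succ_iff.mp (mem_range.mp hj)
    have hfact : (n.choose j : ℝ) * j.factorial * (n - j).factorial = n.factorial := by
      exact_mod_cast Nat.choose_mul_factorial_mul_factorial hjn
    have htn : t ^ n = t ^ j * t ^ (n - j) := by rw [← pow_add, Nat.add_sub_cancel' hjn]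
    have hchoose : (n.choose j : ℝ) ≠ 0 := by exact_mod_cast (Nat.choose_pos hjn).ne'
    rw [htn, ← hfact]
    field_simp
    ring
  simpa only [hcoeff] using hprod

end Appell

lemma eq_appell_of_hasSum_mul_exp {E : ℕ → ℝ → ℝ} {G : ℝ → ℝ} {α ε : ℝ} (hε : 0 < ε)
    (h : ∀ x t : ℝ, |t| < ε →
      HasSum (fun n => E n x / n.factorial * t ^ n) (G t * Real.exp (α * x * t)))
    (m : ℕ) (x : ℝ) :
    E m x = appell (fun j => E j 0) α m x := by
  have h0 (t : ℝ) (ht : |t| < ε) : HasSum (fun n => E n 0 / n.factorial * t ^ n) (G t) := by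
    simpa using h 0 t ht
  have hcoeff := eq_of_hasSum_mul_pow hε (h x) fun t ht =>
    hasSum_appell_div_factorial_mul_pow _ α (h0 t ht)
      (summable_abs_mul_pow_of_summable (fun s hs => (h0 s hs).summable) ht) x
  exact (div_left_inj' (Nat.cast_ne_zero.mpr m.factorial_ne_zero)).mp (congrFun hcoeff m)

theorem multi_polyEuler_deriv_general
    (r : ℕ) (hr : 0 < r) (k : Fin r → ℤ)
    (a b c : ℝ) (hc : 0 < c)
    (E : ℕ → ℝ → ℝ) (ε : ℝ) (hε : 0 < ε)
    (hE : ∀ x t : ℝ, |t| < ε →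
      HasSum (fun n : ℕ => E n x * t ^ n / (n.factorial : ℝ))
        (2 * multiPolyLog r hr k (1 - (a * b) ^ (-t)) / (a ^ (-t) + b ^ t) ^ r *
          c ^ ((r : ℝ) * x * t)))
    (n : ℕ) (x : ℝ) :
    HasDerivAt (fun y : ℝ => E (n + 1) y)
      (((n : ℝ) + 1) * ((r : ℝ) * Real.log c) * E n x) x := by
  set α := (r : ℝ) * Real.log c
  have hegf (x t : ℝ) (ht : |t| < ε) : HasSum (fun n => E n x / n.factorial * t ^ n)
      (2 * multiPolyLog r hr k (1 - (a * b) ^ (-t)) / (a ^ (-t) + b ^ t) ^ r *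
        Real.exp (α * x * t)) := by
    simpa only [mul_div_right_comm, Real.rpow_def_of_pos hc, α, mul_comm (Real.log c),
      mul_assoc] using hE x t ht
  have happell (m : ℕ) : E m = appell (fun j => E j 0) α m :=
    funext (eq_appell_of_hasSum_mul_exp hε hegf m)
  rw [happell (n + 1), happell n]
  exact hasDerivAt_appell_succ _ α n x

/-- `d/dx E_{n+1}^{(k_1,…,k_r)}(x;a,b,c) = (n+1)(r ln c) E_n^{(k_1,…,k_r)}(x;a,b,c)`. -/
theorem multi_polyEuler_deriv
    (r : ℕ) (hr : 0 < r) (k : Fin r → ℤ)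
    (a b c : ℝ) (ha : 0 < a) (hb : 0 < b) (hc : 0 < c)
    (E : ℕ → ℝ → ℝ) (ε : ℝ) (hε : 0 < ε)
    (hE : ∀ x t : ℝ, |t| < ε →
      HasSum (fun n : ℕ => E n x * t ^ n / (n.factorial : ℝ))
        (2 * multiPolyLog r hr k (1 - (a * b) ^ (-t)) / (a ^ (-t) + b ^ t) ^ r *
          c ^ ((r : ℝ) * x * t)))
    (n : ℕ) (x : ℝ) :
    HasDerivAt (fun y : ℝ => E (n + 1) y)
      (((n : ℝ) + 1) * ((r : ℝ) * Real.log c) * E n x) x :=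
  multi_polyEuler_deriv_general r hr k a b c hc E ε hε hE n x
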